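/- arXiv:2601.03639 — 8 statements merged into one kernel-verified Lean document; each statement's English description precedes it below -/
import Mathlib

section
/- Let E be a real Hilbert space, X ⊆ E a nonempty closed convex set, and H : E → ℝ a convex differentiable function. Let x, x̄ ∈ X, let α ≥ 0, and set z = x + α(x − x̄). Let β > 0 and let x⁺ be the orthogonal projection of z − (1/β)∇H(z) onto X. If H(x⁺) ≤ H(z) + ⟪∇H(z), x⁺ − z⟫ + (β/2)‖x⁺ − z‖², then H(x) − H(x⁺) ≥ (β/2)(‖x⁺ − x‖² − α²‖x − x̄‖²). -/
/-!
The optimality condition of the projection gives `β ⟪z - x⁺, x - x⁺⟫ ≤ ⟪∇H z, x - x⁺⟫`.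
Adding the gradient inequality `H z + ⟪∇H z, x - z⟫ ≤ H x` to the descent hypothesis, the
linear terms in `∇H z` combine to this inner product, and the polarization identity
`2 ⟪z - x⁺, x - x⁺⟫ = ‖z - x⁺‖² + ‖x - x⁺‖² - ‖z - x‖²` cancels the quadratic term `‖x⁺ - z‖²`.
Finally `‖z - x‖² = α² ‖x - x̄‖²`.
-/

open scoped RealInnerProductSpace
open Set

theorem ConvexOn.add_fderiv_le {E : Type*} [NormedAddCommGroup E] [NormedSpace ℝ E]
    {s : Set E} {f : E → ℝ} {f' : E →L[ℝ] ℝ} {a b : E} (hf : ConvexOn ℝ s f)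
    (ha : a ∈ s) (hb : b ∈ s) (hf' : HasFDerivAt f f' a) :
    f a + f' (b - a) ≤ f b := by
  have hline : HasDerivAt (f ∘ AffineMap.lineMap (k := ℝ) a b) (f' (b - a)) 0 :=
    (by rwa [AffineMap.lineMap_apply_zero] : HasFDerivAt f f' (AffineMap.lineMap a b (0 : ℝ)))
      |>.comp_hasDerivAt 0 AffineMap.hasDerivAt_lineMap
  have hslope := (hf.comp_affineMap (AffineMap.lineMap a b)).le_slope_of_hasDerivWithinAt
    (by rwa [mem_preimage, AffineMap.lineMap_apply_zero])
    (by rwa [mem_preimage, AffineMap.lineMap_apply_one]) one_pos hline.hasDerivWithinAt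
  simp only [slope_def_field, Function.comp_apply, AffineMap.lineMap_apply_one,
    AffineMap.lineMap_apply_zero, sub_zero, div_one] at hslope
  linarith

section InnerProductSpace

variable {E : Type*} [NormedAddCommGroup E] [InnerProductSpace ℝ E]

theorem ConvexOn.add_inner_gradient_le [CompleteSpace E] {s : Set E} {f : E → ℝ} {f' a b : E}
    (hf : ConvexOn ℝ s f) (ha : a ∈ s) (hb : b ∈ s) (hf' : HasGradientAt f f' a) :
    f a + ⟪f', b - a⟫ ≤ f b :=
  hf.add_fderiv_le ha hb hf'.hasFDerivAt

theorem real_inner_sub_le_zero_of_forall_norm_le {K : Set E} (hK : Convex ℝ K) {u v : E}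
    (hv : v ∈ K) (hmin : ∀ w ∈ K, ‖u - v‖ ≤ ‖u - w‖) : ∀ w ∈ K, ⟪u - v, w - v⟫ ≤ 0 := by
  have : Nonempty K := ⟨⟨v, hv⟩⟩
  refine (norm_eq_iInf_iff_real_inner_le_zero hK hv).mp (le_antisymm
    (le_ciInf fun w => hmin w w.2) (ciInf_le ⟨0, ?_⟩ (⟨v, hv⟩ : K)))
  rintro r ⟨w, rfl⟩
  exact norm_nonneg _

theorem mul_real_inner_le_of_inner_gradStep_le_zero {β : ℝ} (hβ : 0 < β) {g z p x : E}
    (h : ⟪z - β⁻¹ • g - p, x - p⟫ ≤ 0) : β * ⟪z - p, x - p⟫ ≤ ⟪g, x - p⟫ := by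
  rw [show z - β⁻¹ • g - p = (z - p) - β⁻¹ • g by abel, inner_sub_left,
    real_inner_smul_left] at h
  have := mul_le_mul_of_nonneg_left h hβ.le
  rw [mul_sub, ← mul_assoc, mul_inv_cancel₀ hβ.ne'] at this
  linarith

theorem two_mul_real_inner_sub_sub (z p x : E) :
    2 * ⟪z - p, x - p⟫ = ‖z - p‖ ^ 2 + ‖x - p‖ ^ 2 - ‖z - x‖ ^ 2 := by
  have := norm_sub_sq_real (z - p) (x - p)
  rw [sub_sub_sub_cancel_right] at this
  linarith

theorem sub_ge_of_gradStep_bounds {β Hx Hz Hp : ℝ} {g z p x : E}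
    (hstep : β * ⟪z - p, x - p⟫ ≤ ⟪g, x - p⟫) (hlower : Hz + ⟪g, x - z⟫ ≤ Hx)
    (hupper : Hp ≤ Hz + ⟪g, p - z⟫ + β / 2 * ‖p - z‖ ^ 2) :
    Hx - Hp ≥ β / 2 * (‖p - x‖ ^ 2 - ‖z - x‖ ^ 2) := by
  have hsplit : ⟪g, x - z⟫ = ⟪g, x - p⟫ + ⟪g, p - z⟫ := by
    rw [← inner_add_right, sub_add_sub_cancel]
  have hpol := two_mul_real_inner_sub_sub z p x
  rw [norm_sub_rev p z] at hupper
  rw [norm_sub_rev p x]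
  linear_combination hstep + hlower + hupper - β / 2 * hpol - hsplit

end InnerProductSpace

theorem stmt0_general {E : Type*} [NormedAddCommGroup E] [InnerProductSpace ℝ E] [CompleteSpace E]
    (X : Set E) (hXcv : Convex ℝ X)
    (H : E → ℝ) (H' : E → E)
    (hHcv : ConvexOn ℝ Set.univ H)
    (hHd : ∀ u : E, HasGradientAt H (H' u) u)
    (x xbar : E) (hx : x ∈ X)
    (α : ℝ) (z : E) (hz : z = x + α • (x - xbar))
    (β : ℝ) (hβ : 0 < β)
    (xp : E) (hxpX : xp ∈ X)
    (hproj : ∀ w ∈ X, ‖xp - (z - β⁻¹ • H' z)‖ ≤ ‖w - (z - β⁻¹ • H' z)‖)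
    (hdesc : H xp ≤ H z + ⟪H' z, xp - z⟫ + β / 2 * ‖xp - z‖ ^ 2) :
    H x - H xp ≥ β / 2 * (‖xp - x‖ ^ 2 - α ^ 2 * ‖x - xbar‖ ^ 2) := by
  have hvar := real_inner_sub_le_zero_of_forall_norm_le hXcv hxpX
    (fun w hw => by simpa only [norm_sub_rev] using hproj w hw) x hx
  have hlower := hHcv.add_inner_gradient_le (mem_univ z) (mem_univ x) (hHd z)
  have hzx : ‖z - x‖ ^ 2 = α ^ 2 * ‖x - xbar‖ ^ 2 := by
    rw [hz, add_sub_cancel_left, norm_smul, mul_pow, Real.norm_eq_abs, sq_abs]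
  rw [← hzx]
  exact sub_ge_of_gradStep_bounds (mul_real_inner_le_of_inner_gradStep_le_zero hβ hvar)
    hlower hdesc

/-- Extrapolated projected-gradient descent lemma (Lemma 3, Xu–Yin). -/
theorem stmt0 {E : Type*} [NormedAddCommGroup E] [InnerProductSpace ℝ E] [CompleteSpace E]
    (X : Set E) (hXne : X.Nonempty) (hXcl : IsClosed X) (hXcv : Convex ℝ X)
    (H : E → ℝ) (H' : E → E)
    (hHcv : ConvexOn ℝ Set.univ H)
    (hHd : ∀ u : E, HasGradientAt H (H' u) u)
    (x xbar : E) (hx : x ∈ X) (hxbar : xbar ∈ X)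
    (α : ℝ) (hα : 0 ≤ α) (z : E) (hz : z = x + α • (x - xbar))
    (β : ℝ) (hβ : 0 < β)
    (xp : E) (hxpX : xp ∈ X)
    (hproj : ∀ w ∈ X, ‖xp - (z - β⁻¹ • H' z)‖ ≤ ‖w - (z - β⁻¹ • H' z)‖)
    (hdesc : H xp ≤ H z + ⟪H' z, xp - z⟫ + β / 2 * ‖xp - z‖ ^ 2) :
    H x - H xp ≥ β / 2 * (‖xp - x‖ ^ 2 - α ^ 2 * ‖x - xbar‖ ^ 2) :=
  stmt0_general X hXcv H H' hHcv hHd x xbar hx α z hz β hβ xp hxpX hproj hdesc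
end

section
/- Let E be a real Hilbert space, φ : E → ℝ a convex function, α > 0, ε ≥ 0, and z ∈ E. Suppose h⁺ ∈ E is an ε-optimal solution of the proximal problem, i.e. (α/2)‖h⁺ − z‖² + φ(h⁺) ≤ ε + inf_{u ∈ E} [(α/2)‖u − z‖² + φ(u)]. Then there exists δ ∈ E with ‖δ‖ ≤ √(2ε/α) such that the vector α(z − h⁺ − δ) is an ε-subgradient of φ at h⁺, i.e. for all y ∈ E, φ(y) ≥ φ(h⁺) + ⟪α(z − h⁺ − δ), y − h⁺⟫ − ε. -/
/-!
The function `ψ u = α / 2 * ‖u - z‖ ^ 2 + φ u` is `α`-strongly convex. In a complete space the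
approximate minimizers of a strongly convex function bounded below form a Cauchy sequence, whose
limit `x` satisfies the quadratic growth bound `inf ψ + α / 2 * ‖x - y‖ ^ 2 ≤ ψ y` for every `y`.
No continuity of `φ` is needed: up to an error vanishing in the limit, the growth bound already
holds around each approximate minimizer. Taking `δ = x - hp`, the bound at `y = hp` gives
`‖δ‖ ^ 2 ≤ 2 ε / α`, and at arbitrary `y` it unfolds to the `ε`-subgradient inequality.
-/

open scoped RealInnerProductSpace
open Set Filter Topology

section InnerProductSpace
variable {E : Type*} [NormedAddCommGroup E] [InnerProductSpace ℝ E]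

theorem strongConvexOn_univ_half_mul_sq_norm_sub (m : ℝ) (z : E) :
    StrongConvexOn univ m fun u => m / 2 * ‖u - z‖ ^ 2 := by
  rw [strongConvexOn_iff_convex]
  have h_affine : (fun u => m / 2 * ‖u - z‖ ^ 2 - m / 2 * ‖u‖ ^ 2)
      = fun u => ((-m) • innerₛₗ ℝ z) u + m / 2 * ‖z‖ ^ 2 := by
    ext u
    simp only [norm_sub_sq_real, real_inner_comm, neg_smul, LinearMap.neg_apply,
      LinearMap.smul_apply, innerₛₗ_apply_apply, smul_eq_mul]
    ring
  rw [h_affine]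
  exact (LinearMap.convexOn _ convex_univ).add_const _

theorem ConvexOn.strongConvexOn_half_mul_sq_norm_sub_add {φ : E → ℝ} (hφ : ConvexOn ℝ univ φ)
    (m : ℝ) (z : E) : StrongConvexOn univ m fun u => m / 2 * ‖u - z‖ ^ 2 + φ u := by
  simpa [StrongConvexOn, Pi.add_def] using
    (strongConvexOn_univ_half_mul_sq_norm_sub m z).add hφ.uniformConvexOn_zero

end InnerProductSpace

namespace StrongConvexOn
variable {E : Type*} [NormedAddCommGroup E] [NormedSpace ℝ E] {f : E → ℝ} {m : ℝ}

theorem sq_norm_sub_le_of_le_iInf_add (hf : StrongConvexOn univ m f) (hbdd : BddBelow (range f))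
    {η : ℝ} {u v : E} (hu : f u ≤ (⨅ w, f w) + η) (hv : f v ≤ (⨅ w, f w) + η) :
    m / 8 * ‖u - v‖ ^ 2 ≤ η := by
  have hmid := hf.2 (mem_univ u) (mem_univ v) one_half_pos.le one_half_pos.le (add_halves 1)
  have hmin := ciInf_le hbdd ((1 / 2 : ℝ) • u + (1 / 2 : ℝ) • v)
  simp only [smul_eq_mul] at hmid
  linarith

theorem iInf_sub_add_le_of_le_iInf_add_sq (hf : StrongConvexOn univ m f)
    (hbdd : BddBelow (range f)) {t : ℝ} (ht₀ : 0 < t) (ht₁ : t ≤ 1) {u : E}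
    (hu : f u ≤ (⨅ w, f w) + t ^ 2) (y : E) :
    (⨅ w, f w) - t + (1 - t) * (m / 2 * ‖u - y‖ ^ 2) ≤ f y := by
  have hseg := hf.2 (mem_univ u) (mem_univ y) (sub_nonneg.2 ht₁) ht₀.le (sub_add_cancel 1 t)
  have hmin := ciInf_le hbdd ((1 - t) • u + t • y)
  simp only [smul_eq_mul] at hseg
  have hscaled : t * ((⨅ w, f w) - t + (1 - t) * (m / 2 * ‖u - y‖ ^ 2)) ≤ t * f y := by
    nlinarith
  exact le_of_mul_le_mul_left hscaled ht₀

theorem exists_forall_iInf_add_le [CompleteSpace E] (hf : StrongConvexOn univ m f) (hm : 0 < m)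
    (hbdd : BddBelow (range f)) : ∃ x, ∀ y, (⨅ w, f w) + m / 2 * ‖x - y‖ ^ 2 ≤ f y := by
  set t : ℕ → ℝ := fun n => 1 / ((n : ℝ) + 1)
  have ht₀ : ∀ n, 0 < t n := fun n => by positivity
  have ht₁ : ∀ n, t n ≤ 1 := fun n => by
    simpa [t] using Nat.one_div_le_one_div (α := ℝ) n.zero_le
  have ht : Tendsto t atTop (𝓝 0) := tendsto_one_div_add_atTop_nhds_zero_nat
  obtain ⟨u, hu⟩ : ∃ u : ℕ → E, ∀ n, f (u n) ≤ (⨅ w, f w) + t n ^ 2 := by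
    choose u hu using fun n =>
      exists_lt_of_ciInf_lt (lt_add_of_pos_right (⨅ w, f w) (pow_pos (ht₀ n) 2))
    exact ⟨u, fun n => (hu n).le⟩
  have hcauchy : CauchySeq u := by
    refine cauchySeq_of_le_tendsto_0 (fun N => √(8 / m * t N ^ 2)) (fun n p N hn hp => ?_) ?_
    · have htN : ∀ k, N ≤ k → t k ^ 2 ≤ t N ^ 2 := fun k hk =>
        pow_le_pow_left₀ (ht₀ k).le (Nat.one_div_le_one_div hk) 2
      have hclose := hf.sq_norm_sub_le_of_le_iInf_add hbdd
        ((hu n).trans (add_le_add_right (htN n hn) _))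
        ((hu p).trans (add_le_add_right (htN p hp) _))
      rw [dist_eq_norm, Real.le_sqrt (norm_nonneg _) (by positivity), div_mul_eq_mul_div,
        le_div_iff₀ hm]
      linarith
    · simpa using ((ht.pow 2).const_mul (8 / m)).sqrt
  obtain ⟨x, hx⟩ := cauchySeq_tendsto_of_complete hcauchy
  refine ⟨x, fun y => le_of_tendsto' (x := atTop) ?_ fun n =>
    hf.iInf_sub_add_le_of_le_iInf_add_sq hbdd (ht₀ n) (ht₁ n) (hu n) y⟩
  have hcont : Continuous fun p : ℝ × E =>
      (⨅ w, f w) - p.1 + (1 - p.1) * (m / 2 * ‖p.2 - y‖ ^ 2) := by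
    fun_prop
  simpa [Function.comp_def] using (hcont.tendsto (0, x)).comp (ht.prodMk_nhds hx)

end StrongConvexOn

theorem stmt1_general {E : Type*} [NormedAddCommGroup E] [InnerProductSpace ℝ E] [CompleteSpace E]
    (φ : E → ℝ) (hφ : ConvexOn ℝ Set.univ φ)
    (α : ℝ) (hα : 0 < α) (ε : ℝ) (z hp : E)
    (hopt : ∀ u : E, α / 2 * ‖hp - z‖ ^ 2 + φ hp ≤ ε + (α / 2 * ‖u - z‖ ^ 2 + φ u)) :
    ∃ δ : E, ‖δ‖ ≤ Real.sqrt (2 * ε / α) ∧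
      ∀ y : E, φ y ≥ φ hp + ⟪α • (z - hp - δ), y - hp⟫ - ε := by
  set ψ : E → ℝ := fun u => α / 2 * ‖u - z‖ ^ 2 + φ u
  have hψ : ∀ u, ψ hp - ε ≤ ψ u := fun u => by simp only [ψ]; linarith [hopt u]
  have hbdd : BddBelow (range ψ) := ⟨ψ hp - ε, forall_mem_range.2 hψ⟩
  have hp_le : ψ hp - ε ≤ ⨅ u, ψ u := le_ciInf hψ
  obtain ⟨x, hx⟩ :=
    (hφ.strongConvexOn_half_mul_sq_norm_sub_add α z).exists_forall_iInf_add_le hα hbdd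
  simp only [ψ] at hp_le
  refine ⟨x - hp, Real.le_sqrt_of_sq_le ?_, fun y => ?_⟩
  · rw [le_div_iff₀ hα]
    linarith [hx hp]
  · have three_point : ⟪α • (z - hp - (x - hp)), y - hp⟫
        = α / 2 * (‖hp - z‖ ^ 2 - ‖y - z‖ ^ 2 + ‖x - y‖ ^ 2 - ‖x - hp‖ ^ 2) := by
      rw [sub_sub_sub_cancel_right]
      simp only [← real_inner_self_eq_norm_sq, inner_sub_left, inner_sub_right,
        real_inner_smul_left]
      rw [real_inner_comm hp z, real_inner_comm y z, real_inner_comm x y, real_inner_comm x hp]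
      ring
    rw [three_point]
    linarith [hx y, mul_nonneg hα.le (sq_nonneg ‖x - hp‖)]

/-- Lemma 2 (Schmidt et al.): an ε-optimal solution of the proximal problem yields an
ε-subgradient certificate. -/
theorem stmt1 {E : Type*} [NormedAddCommGroup E] [InnerProductSpace ℝ E] [CompleteSpace E]
    (φ : E → ℝ) (hφ : ConvexOn ℝ Set.univ φ)
    (α : ℝ) (hα : 0 < α) (ε : ℝ) (hε : 0 ≤ ε) (z hp : E)
    (hopt : ∀ u : E, α / 2 * ‖hp - z‖ ^ 2 + φ hp ≤ ε + (α / 2 * ‖u - z‖ ^ 2 + φ u)) :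
    ∃ δ : E, ‖δ‖ ≤ Real.sqrt (2 * ε / α) ∧
      ∀ y : E, φ y ≥ φ hp + ⟪α • (z - hp - δ), y - hp⟫ - ε :=
  stmt1_general φ hφ α hα ε z hp hopt
end

section
/- Let E be a real Hilbert space, let γ : E → ℝ be convex and differentiable with α-Lipschitz gradient for some α > 0, and let φ : E → ℝ be convex. Let ε ≥ 0, μ ≥ 0, and h, h⁻ ∈ E; set h̃ = h + μ(h − h⁻) and z = h̃ − (1/α)∇γ(h̃). Suppose h⁺ ∈ E and δ ∈ E satisfy ‖δ‖ ≤ √(2ε/α) and, for all y ∈ E, φ(y) ≥ φ(h⁺) + ⟪α(z − h⁺ − δ), y − h⁺⟫ − ε. Then γ(h⁺) + φ(h⁺) − (γ(h) + φ(h)) ≤ √(2αε)·‖h⁺ − h‖ − (α/2)‖h⁺ − h‖² + (α/2)μ²‖h − h⁻‖² + ε. -/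
/-!
The descent lemma at the extrapolated point `h̃`, together with the gradient inequality of the
convex `γ` at `h̃`, gives `γ h⁺ - γ h ≤ ⟪∇γ h̃, h⁺ - h⟫ + α/2 ‖h⁺ - h̃‖²`. The `ε`-subgradient
inequality at `y = h` cancels the gradient term, and the three-point identity
`‖h̃ - h‖² = ‖h̃ - h⁺‖² + 2⟪h̃ - h⁺, h⁺ - h⟫ + ‖h⁺ - h‖²` leaves
`α/2 (‖h̃ - h‖² - ‖h⁺ - h‖²) - α⟪δ, h⁺ - h⟫ + ε`, where `‖h̃ - h‖ = |μ| ‖h - h⁻‖` and the error term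
is bounded by Cauchy–Schwarz.
-/

open scoped RealInnerProductSpace

open Set AffineMap

section Gradient

variable {E : Type*} [NormedAddCommGroup E] [InnerProductSpace ℝ E] [CompleteSpace E]
  {f : E → ℝ}

theorem HasGradientAt.comp_lineMap {g x y : E} {t : ℝ} (hf : HasGradientAt f g (lineMap x y t)) :
    HasDerivAt (fun s : ℝ => f (lineMap x y s)) ⟪g, y - x⟫ t := by
  simpa [InnerProductSpace.toDual_apply_apply, Function.comp_def] using
    (hasGradientAt_iff_hasFDerivAt.mp hf).comp_hasDerivAt t hasDerivAt_lineMap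

theorem ConvexOn.add_inner_le_of_hasGradientAt {g x : E} (hf : ConvexOn ℝ univ f)
    (hg : HasGradientAt f g x) (y : E) : f x + ⟪g, y - x⟫ ≤ f y := by
  have hline : ConvexOn ℝ univ (fun t : ℝ => f (lineMap x y t)) :=
    hf.comp_affineMap (lineMap x y)
  have hder : HasDerivAt (fun t : ℝ => f (lineMap x y t)) ⟪g, y - x⟫ 0 :=
    HasGradientAt.comp_lineMap (by rwa [lineMap_apply_zero])
  have hslope := hline.le_slope_of_hasDerivAt (mem_univ 0) (mem_univ 1) zero_lt_one hder
  simp only [slope_def_field, lineMap_apply_zero, lineMap_apply_one, sub_zero, div_one] at hslope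
  linarith

theorem le_add_inner_add_sq_of_lipschitz_gradient {f' : E → E} {L : ℝ}
    (hf : ∀ u, HasGradientAt f (f' u) u) (hlip : ∀ u v, ‖f' u - f' v‖ ≤ L * ‖u - v‖) (x y : E) :
    f y ≤ f x + ⟪f' x, y - x⟫ + L / 2 * ‖y - x‖ ^ 2 := by
  set ψ : ℝ → ℝ := fun t => f (lineMap x y t) - t * ⟪f' x, y - x⟫ - L / 2 * t ^ 2 * ‖y - x‖ ^ 2
  have hder : ∀ t : ℝ, HasDerivAt ψ
      (⟪f' (lineMap x y t) - f' x, y - x⟫ - L * t * ‖y - x‖ ^ 2) t := by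
    intro t
    have hquad := ((hasDerivAt_pow 2 t).const_mul (L / 2)).mul_const (‖y - x‖ ^ 2)
    refine (((hf _).comp_lineMap.sub ((hasDerivAt_id t).mul_const ⟪f' x, y - x⟫)).sub
      hquad).congr_deriv ?_
    rw [inner_sub_left]; simp only [Nat.cast_ofNat, one_mul]; ring
  have hψ : AntitoneOn ψ (Icc 0 1) := by
    refine antitoneOn_of_hasDerivWithinAt_nonpos (convex_Icc 0 1)
      (fun t _ => (hder t).continuousAt.continuousWithinAt)
      (fun t _ => (hder t).hasDerivWithinAt) fun t ht => ?_
    rw [interior_Icc] at ht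
    refine sub_nonpos.mpr ?_
    have hdist : ‖lineMap x y t - x‖ = t * ‖y - x‖ := by
      rw [lineMap_apply_module', add_sub_cancel_right, norm_smul, Real.norm_of_nonneg ht.1.le]
    calc ⟪f' (lineMap x y t) - f' x, y - x⟫ ≤ ‖f' (lineMap x y t) - f' x‖ * ‖y - x‖ :=
          real_inner_le_norm _ _
      _ ≤ L * ‖lineMap x y t - x‖ * ‖y - x‖ := by gcongr; exact hlip _ _
      _ = L * t * ‖y - x‖ ^ 2 := by rw [hdist]; ring
  have h01 := hψ (left_mem_Icc.mpr zero_le_one) (right_mem_Icc.mpr zero_le_one) zero_le_one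
  simp only [ψ, lineMap_apply_zero, lineMap_apply_one] at h01
  linarith

theorem sub_le_inner_add_sq_of_convexOn_of_lipschitz_gradient {f' : E → E} {L : ℝ}
    (hcv : ConvexOn ℝ univ f) (hf : ∀ u, HasGradientAt f (f' u) u)
    (hlip : ∀ u v, ‖f' u - f' v‖ ≤ L * ‖u - v‖) (x p h : E) :
    f p - f h ≤ ⟪f' x, p - h⟫ + L / 2 * ‖p - x‖ ^ 2 := by
  have hdescent := le_add_inner_add_sq_of_lipschitz_gradient hf hlip x p
  have htangent := hcv.add_inner_le_of_hasGradientAt (hf x) h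
  have hsplit : ⟪f' x, p - h⟫ = ⟪f' x, p - x⟫ - ⟪f' x, h - x⟫ := by
    rw [← inner_sub_right, sub_sub_sub_cancel_right]
  linarith

theorem inexact_proximal_gradient_step_le {γ φ : E → ℝ} {γ' : E → E} {α ε : ℝ} (hα : α ≠ 0)
    (hγcv : ConvexOn ℝ univ γ) (hγd : ∀ u, HasGradientAt γ (γ' u) u)
    (hγlip : ∀ u v, ‖γ' u - γ' v‖ ≤ α * ‖u - v‖) {x p δ : E}
    (hsub : ∀ y, φ y ≥ φ p + ⟪α • (x - α⁻¹ • γ' x - p - δ), y - p⟫ - ε) (h : E) :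
    γ p + φ p - (γ h + φ h) ≤
      α / 2 * ‖x - h‖ ^ 2 - α / 2 * ‖p - h‖ ^ 2 - α * ⟪δ, p - h⟫ + ε := by
  have hγ := sub_le_inner_add_sq_of_convexOn_of_lipschitz_gradient hγcv hγd hγlip x p h
  have hφ := hsub h
  have hstep : ⟪α • (x - α⁻¹ • γ' x - p - δ), h - p⟫
      = -(α * ⟪x - p, p - h⟫) + ⟪γ' x, p - h⟫ + α * ⟪δ, p - h⟫ := by
    rw [← neg_sub p h]
    simp only [inner_neg_right, inner_sub_left, real_inner_smul_left]
    field_simp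
    ring
  have hpolar : α / 2 * ‖x - h‖ ^ 2
      = α / 2 * ‖x - p‖ ^ 2 + α * ⟪x - p, p - h⟫ + α / 2 * ‖p - h‖ ^ 2 := by
    rw [← sub_add_sub_cancel x p h, norm_add_sq_real]
    ring
  rw [norm_sub_rev] at hγ
  linarith

end Gradient

theorem stmt2_general {E : Type*} [NormedAddCommGroup E] [InnerProductSpace ℝ E] [CompleteSpace E]
    (γ φ : E → ℝ) (γ' : E → E) (α : ℝ) (hα : 0 < α)
    (hγcv : ConvexOn ℝ Set.univ γ)
    (hγd : ∀ u : E, HasGradientAt γ (γ' u) u)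
    (hγlip : ∀ u v : E, ‖γ' u - γ' v‖ ≤ α * ‖u - v‖)
    (ε : ℝ) (μ : ℝ)
    (h hm : E) (htld z : E)
    (htld_def : htld = h + μ • (h - hm))
    (hz_def : z = htld - α⁻¹ • γ' htld)
    (hp δ : E) (hδ : ‖δ‖ ≤ Real.sqrt (2 * ε / α))
    (hsub : ∀ y : E, φ y ≥ φ hp + ⟪α • (z - hp - δ), y - hp⟫ - ε) :
    γ hp + φ hp - (γ h + φ h) ≤
      Real.sqrt (2 * α * ε) * ‖hp - h‖ - α / 2 * ‖hp - h‖ ^ 2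
        + α / 2 * μ ^ 2 * ‖h - hm‖ ^ 2 + ε := by
  subst hz_def
  have hstep := inexact_proximal_gradient_step_le hα.ne' hγcv hγd hγlip hsub h
  have hextrapolation : ‖htld - h‖ ^ 2 = μ ^ 2 * ‖h - hm‖ ^ 2 := by
    rw [htld_def, add_sub_cancel_left, norm_smul, mul_pow, Real.norm_eq_abs, sq_abs]
  have hαδ : α * ‖δ‖ ≤ Real.sqrt (2 * α * ε) :=
    calc α * ‖δ‖ ≤ α * Real.sqrt (2 * ε / α) := by gcongr
      _ = Real.sqrt (α ^ 2 * (2 * ε / α)) := by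
          rw [Real.sqrt_mul (sq_nonneg α), Real.sqrt_sq hα.le]
      _ = Real.sqrt (2 * α * ε) := by congr 1; field_simp
  have herror : -(α * ⟪δ, hp - h⟫) ≤ Real.sqrt (2 * α * ε) * ‖hp - h‖ :=
    calc -(α * ⟪δ, hp - h⟫) ≤ α * (‖δ‖ * ‖hp - h‖) := by
          rw [← mul_neg]
          gcongr
          exact (neg_le_abs _).trans (abs_real_inner_le_norm δ (hp - h))
      _ ≤ Real.sqrt (2 * α * ε) * ‖hp - h‖ := by rw [← mul_assoc]; gcongr
  rw [hextrapolation] at hstep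
  linarith

/-- Per-iteration descent inequality for the inexact accelerated proximal-gradient update. -/
theorem stmt2 {E : Type*} [NormedAddCommGroup E] [InnerProductSpace ℝ E] [CompleteSpace E]
    (γ φ : E → ℝ) (γ' : E → E) (α : ℝ) (hα : 0 < α)
    (hγcv : ConvexOn ℝ Set.univ γ)
    (hγd : ∀ u : E, HasGradientAt γ (γ' u) u)
    (hγlip : ∀ u v : E, ‖γ' u - γ' v‖ ≤ α * ‖u - v‖)
    (hφcv : ConvexOn ℝ Set.univ φ)
    (ε : ℝ) (hε : 0 ≤ ε) (μ : ℝ) (hμ : 0 ≤ μ)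
    (h hm : E) (htld z : E)
    (htld_def : htld = h + μ • (h - hm))
    (hz_def : z = htld - α⁻¹ • γ' htld)
    (hp δ : E) (hδ : ‖δ‖ ≤ Real.sqrt (2 * ε / α))
    (hsub : ∀ y : E, φ y ≥ φ hp + ⟪α • (z - hp - δ), y - hp⟫ - ε) :
    γ hp + φ hp - (γ h + φ h) ≤
      Real.sqrt (2 * α * ε) * ‖hp - h‖ - α / 2 * ‖hp - h‖ ^ 2
        + α / 2 * μ ^ 2 * ‖h - hm‖ ^ 2 + ε :=
  stmt2_general γ φ γ' α hα hγcv hγd hγlip ε μ h hm htld z htld_def hz_def hp δ hδ hsub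
end

section
/- Let H be a complex m×n matrix, y ∈ ℂᵐ, ρ ≥ 0, and let β > 0 satisfy ‖Hu‖² ≤ β‖u‖² for all u ∈ ℂⁿ. Let X ⊆ ℂⁿ be a nonempty closed convex set (with ℂⁿ regarded as a real Hilbert space), let x, x⁻ ∈ X, let ι ≥ 0, and set x̃ = x + ι(x − x⁻). Define φ(u) = (1/2)‖y − Hu‖² − ρ‖u‖² and let ψ(u) = (1/2)‖y − Hu‖² − 2ρ·Re⟨x, u − x⟩ − ρ‖x‖² be the majorant of φ at x, with real gradient ∇ψ(u) = Hᴴ(Hu − y) − 2ρx. Let x⁺ be the orthogonal projection of x̃ − (1/β)∇ψ(x̃) onto X. Then φ(x⁺) − φ(x) ≤ −(β/2)(‖x⁺ − x‖² − ι²‖x − x⁻‖²). -/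
/-!
The objective `φ u = ½‖y - H u‖² - ρ‖u‖²` equals `ψ u - ρ‖u - x‖²`, so `φ ≤ ψ` with equality
at `x`. The majorant `ψ` is convex with gradient `g`, and `β`-smooth by the bound on `H`.
For such a function, sandwiching `ψ x̃` between the smoothness bound at `x⁺` and the convexity
bound at `x`, and using the variational inequality of the projection at `x`, gives
`ψ x⁺ ≤ ψ x + β/2 (‖x̃ - x‖² - ‖x⁺ - x‖²)`; finally `‖x̃ - x‖ = |ι| ‖x - x⁻‖`.
-/

open Filter Topology RCLike
open scoped InnerProductSpace

section

variable {𝕜 E : Type*} [RCLike 𝕜] [NormedAddCommGroup E] [InnerProductSpace 𝕜 E]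
  [NormedSpace ℝ E] [IsScalarTower ℝ 𝕜 E]

theorem re_inner_real_smul_left (r : ℝ) (u v : E) : re ⟪r • u, v⟫_𝕜 = r * re ⟪u, v⟫_𝕜 := by
  rw [RCLike.real_smul_eq_coe_smul (K := 𝕜), inner_smul_real_left, RCLike.smul_re]

theorem re_inner_real_smul_right (r : ℝ) (u v : E) : re ⟪u, r • v⟫_𝕜 = r * re ⟪u, v⟫_𝕜 := by
  rw [RCLike.real_smul_eq_coe_smul (K := 𝕜), inner_smul_real_right, RCLike.smul_re]

theorem nonpos_of_forall_le_mul {a b : ℝ} (h : ∀ t : ℝ, 0 < t → t ≤ 1 → a ≤ t * b) : a ≤ 0 := by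
  have hlim : Tendsto (fun t : ℝ => t * b) (𝓝[>] 0) (𝓝 0) := by
    have h0 : Tendsto (fun t : ℝ => t * b) (𝓝 0) (𝓝 (0 * b)) := tendsto_id.mul_const b
    rw [zero_mul] at h0
    exact h0.mono_left nhdsWithin_le_nhds
  refine ge_of_tendsto hlim ?_
  filter_upwards [Ioc_mem_nhdsGT zero_lt_one] with t ht using h t ht.1 ht.2

theorem Convex.re_inner_sub_nonpos_of_forall_norm_sub_le {K : Set E} (hK : Convex ℝ K)
    {p z : E} (hp : p ∈ K) (hmin : ∀ w ∈ K, ‖p - z‖ ≤ ‖w - z‖) {w : E} (hw : w ∈ K) :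
    re ⟪z - p, w - p⟫_𝕜 ≤ 0 := by
  have key : ∀ t : ℝ, 0 < t → t ≤ 1 → 2 * re ⟪z - p, w - p⟫_𝕜 ≤ t * ‖w - p‖ ^ 2 := by
    intro t ht0 ht1
    have hmem : p + t • (w - p) ∈ K := hK.add_smul_sub_mem hp hw ⟨ht0.le, ht1⟩
    have hle := pow_le_pow_left₀ (norm_nonneg _) (hmin _ hmem) 2
    have hexp : p + t • (w - p) - z = (p - z) + t • (w - p) := by abel
    rw [hexp, norm_add_sq (𝕜 := 𝕜), re_inner_real_smul_right, norm_smul, Real.norm_eq_abs,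
      mul_pow, sq_abs, ← neg_sub z p, inner_neg_left, map_neg] at hle
    nlinarith
  linarith [nonpos_of_forall_le_mul key]

theorem le_add_of_projected_gradient_step {ψ : E → ℝ} {g : E → E} {β : ℝ} (hβ : 0 < β)
    (hsmooth : ∀ u v, ψ u ≤ ψ v + re ⟪g v, u - v⟫_𝕜 + β / 2 * ‖u - v‖ ^ 2)
    (hconvex : ∀ u v, ψ v + re ⟪g v, u - v⟫_𝕜 ≤ ψ u)
    {X : Set E} (hX : Convex ℝ X) {x xt xp : E} (hx : x ∈ X) (hxp : xp ∈ X)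
    (hproj : ∀ w ∈ X, ‖xp - (xt - β⁻¹ • g xt)‖ ≤ ‖w - (xt - β⁻¹ • g xt)‖) :
    ψ xp ≤ ψ x + β / 2 * (‖xt - x‖ ^ 2 - ‖xp - x‖ ^ 2) := by
  have hvar : β * re ⟪xt - xp, x - xp⟫_𝕜 ≤ re ⟪g xt, x - xp⟫_𝕜 := by
    have h := mul_le_mul_of_nonneg_left
      (hX.re_inner_sub_nonpos_of_forall_norm_sub_le (𝕜 := 𝕜) hxp hproj hx) hβ.le
    rwa [sub_right_comm, inner_sub_left, map_sub, re_inner_real_smul_left, mul_sub,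
      ← mul_assoc, mul_inv_cancel₀ hβ.ne', one_mul, mul_zero, sub_nonpos] at h
  have hpolar : ‖xt - x‖ ^ 2 = ‖xt - xp‖ ^ 2 - 2 * re ⟪xt - xp, x - xp⟫_𝕜 + ‖x - xp‖ ^ 2 := by
    rw [← norm_sub_sq, sub_sub_sub_cancel_right]
  have hlin : re ⟪g xt, xp - xt⟫_𝕜 = re ⟪g xt, x - xt⟫_𝕜 - re ⟪g xt, x - xp⟫_𝕜 := by
    rw [← map_sub, ← inner_sub_right, sub_sub_sub_cancel_left]
  have hupper := hsmooth xp xt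
  have hlower := hconvex x xt
  rw [norm_sub_rev xp xt] at hupper
  rw [norm_sub_rev xp x, hpolar]
  linarith

end

section

variable {𝕜 E F : Type*} [RCLike 𝕜] [NormedAddCommGroup E] [InnerProductSpace 𝕜 E]
  [NormedAddCommGroup F] [InnerProductSpace 𝕜 F]

/-- The majorant of `u ↦ ½‖y - A u‖² - ρ‖u‖²` obtained by linearizing its concave part at `x`. -/
noncomputable def linearizedObjective (A : E →ₗ[𝕜] F) (y : F) (ρ : ℝ) (x u : E) : ℝ :=
  1 / 2 * ‖y - A u‖ ^ 2 - 2 * ρ * re ⟪x, u - x⟫_𝕜 - ρ * ‖x‖ ^ 2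

theorem objective_eq_linearizedObjective_sub (A : E →ₗ[𝕜] F) (y : F) (ρ : ℝ) (x u : E) :
    1 / 2 * ‖y - A u‖ ^ 2 - ρ * ‖u‖ ^ 2 = linearizedObjective A y ρ x u - ρ * ‖u - x‖ ^ 2 := by
  have h := norm_add_sq (𝕜 := 𝕜) x (u - x)
  rw [add_sub_cancel] at h
  rw [linearizedObjective, h]
  ring

variable [FiniteDimensional 𝕜 E] [FiniteDimensional 𝕜 F]

theorem half_norm_sub_apply_sq_eq (A : E →ₗ[𝕜] F) (y : F) (u v : E) :
    1 / 2 * ‖y - A u‖ ^ 2 = 1 / 2 * ‖y - A v‖ ^ 2 + re ⟪A.adjoint (A v - y), u - v⟫_𝕜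
      + 1 / 2 * ‖A (u - v)‖ ^ 2 := by
  have h : y - A u = (y - A v) - A (u - v) := by rw [map_sub]; abel
  rw [h, norm_sub_sq (𝕜 := 𝕜), LinearMap.adjoint_inner_left, ← neg_sub y (A v), inner_neg_left,
    map_neg]
  ring

variable [NormedSpace ℝ E] [IsScalarTower ℝ 𝕜 E] (A : E →ₗ[𝕜] F) (y : F) (ρ : ℝ) (x : E)

theorem linearizedObjective_eq (u v : E) :
    linearizedObjective A y ρ x u = linearizedObjective A y ρ x v
      + re ⟪A.adjoint (A v - y) - (2 * ρ) • x, u - v⟫_𝕜 + 1 / 2 * ‖A (u - v)‖ ^ 2 := by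
  have hlin : re ⟪x, u - x⟫_𝕜 = re ⟪x, v - x⟫_𝕜 + re ⟪x, u - v⟫_𝕜 := by
    rw [← map_add, ← inner_add_right, sub_add_sub_cancel']
  simp only [linearizedObjective, inner_sub_left, map_sub, re_inner_real_smul_left, hlin,
    half_norm_sub_apply_sq_eq A y u v]
  ring

theorem linearizedObjective_le {β : ℝ} (hA : ∀ u, ‖A u‖ ^ 2 ≤ β * ‖u‖ ^ 2) (u v : E) :
    linearizedObjective A y ρ x u ≤ linearizedObjective A y ρ x v
      + re ⟪A.adjoint (A v - y) - (2 * ρ) • x, u - v⟫_𝕜 + β / 2 * ‖u - v‖ ^ 2 := by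
  rw [linearizedObjective_eq A y ρ x u v]
  linarith [hA (u - v)]

theorem linearizedObjective_ge (u v : E) :
    linearizedObjective A y ρ x v + re ⟪A.adjoint (A v - y) - (2 * ρ) • x, u - v⟫_𝕜
      ≤ linearizedObjective A y ρ x u := by
  rw [linearizedObjective_eq A y ρ x u v]
  linarith [sq_nonneg ‖A (u - v)‖]

end

open Matrix

theorem stmt4_general {m n : ℕ} (H : Matrix (Fin m) (Fin n) ℂ) (y : EuclideanSpace ℂ (Fin m))
    (ρ : ℝ) (hρ : 0 ≤ ρ) (β : ℝ) (hβ : 0 < β)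
    (hβop : ∀ u : EuclideanSpace ℂ (Fin n),
      ‖Matrix.toEuclideanLin H u‖ ^ 2 ≤ β * ‖u‖ ^ 2)
    (X : Set (EuclideanSpace ℂ (Fin n)))
    (hXcv : Convex ℝ X)
    (x xm : EuclideanSpace ℂ (Fin n)) (hx : x ∈ X)
    (ι : ℝ)
    (xt : EuclideanSpace ℂ (Fin n)) (hxt : xt = x + ι • (x - xm))
    (g : EuclideanSpace ℂ (Fin n) → EuclideanSpace ℂ (Fin n))
    (hg : ∀ u : EuclideanSpace ℂ (Fin n),
      g u = Matrix.toEuclideanLin Hᴴ (Matrix.toEuclideanLin H u - y) - (2 * ρ) • x)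
    (xp : EuclideanSpace ℂ (Fin n)) (hxpX : xp ∈ X)
    (hproj : ∀ w ∈ X, ‖xp - (xt - β⁻¹ • g xt)‖ ≤ ‖w - (xt - β⁻¹ • g xt)‖) :
    (1 / 2 * ‖y - Matrix.toEuclideanLin H xp‖ ^ 2 - ρ * ‖xp‖ ^ 2)
        - (1 / 2 * ‖y - Matrix.toEuclideanLin H x‖ ^ 2 - ρ * ‖x‖ ^ 2)
      ≤ -(β / 2) * (‖xp - x‖ ^ 2 - ι ^ 2 * ‖x - xm‖ ^ 2) := by
  set A := Matrix.toEuclideanLin H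
  obtain rfl : g = fun u => A.adjoint (A u - y) - (2 * ρ) • x := by
    funext u
    rw [hg, Matrix.toEuclideanLin_conjTranspose_eq_adjoint]
  have hdescent := le_add_of_projected_gradient_step hβ (linearizedObjective_le A y ρ x hβop)
    (linearizedObjective_ge A y ρ x) hXcv hx hxpX hproj
  have hextrapolation : ‖xt - x‖ ^ 2 = ι ^ 2 * ‖x - xm‖ ^ 2 := by
    rw [hxt, add_sub_cancel_left, norm_smul, Real.norm_eq_abs, mul_pow, sq_abs]
  rw [objective_eq_linearizedObjective_sub A y ρ x xp,
    objective_eq_linearizedObjective_sub A y ρ x x, sub_self, norm_zero]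
  rw [hextrapolation] at hdescent
  linarith [mul_nonneg hρ (sq_nonneg ‖xp - x‖)]

/-- Per-iteration descent inequality for the one-step accelerated projected-gradient
symbol update. -/
theorem stmt4 {m n : ℕ} (H : Matrix (Fin m) (Fin n) ℂ) (y : EuclideanSpace ℂ (Fin m))
    (ρ : ℝ) (hρ : 0 ≤ ρ) (β : ℝ) (hβ : 0 < β)
    (hβop : ∀ u : EuclideanSpace ℂ (Fin n),
      ‖Matrix.toEuclideanLin H u‖ ^ 2 ≤ β * ‖u‖ ^ 2)
    (X : Set (EuclideanSpace ℂ (Fin n))) (hXne : X.Nonempty) (hXcl : IsClosed X)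
    (hXcv : Convex ℝ X)
    (x xm : EuclideanSpace ℂ (Fin n)) (hx : x ∈ X) (hxm : xm ∈ X)
    (ι : ℝ) (hι : 0 ≤ ι)
    (xt : EuclideanSpace ℂ (Fin n)) (hxt : xt = x + ι • (x - xm))
    (g : EuclideanSpace ℂ (Fin n) → EuclideanSpace ℂ (Fin n))
    (hg : ∀ u : EuclideanSpace ℂ (Fin n),
      g u = Matrix.toEuclideanLin Hᴴ (Matrix.toEuclideanLin H u - y) - (2 * ρ) • x)
    (xp : EuclideanSpace ℂ (Fin n)) (hxpX : xp ∈ X)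
    (hproj : ∀ w ∈ X, ‖xp - (xt - β⁻¹ • g xt)‖ ≤ ‖w - (xt - β⁻¹ • g xt)‖) :
    (1 / 2 * ‖y - Matrix.toEuclideanLin H xp‖ ^ 2 - ρ * ‖xp‖ ^ 2)
        - (1 / 2 * ‖y - Matrix.toEuclideanLin H x‖ ^ 2 - ρ * ‖x‖ ^ 2)
      ≤ -(β / 2) * (‖xp - x‖ ^ 2 - ι ^ 2 * ‖x - xm‖ ^ 2) :=
  stmt4_general H y ρ hρ β hβ hβop X hXcv x xm hx ι xt hxt g hg xp hxpX hproj
end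

section
/- Let A ⊆ ℂᵈ be a nonempty compact set that is closed under multiplication by unit-modulus complex scalars and whose real linear span is all of ℂᵈ (viewing ℂᵈ as a real vector space). Let α > 0, η > 0, and ĥ ∈ ℂᵈ. Then inf_{h ∈ ℂᵈ} [ (α/2)‖ĥ − h‖² + η·gauge(conv A)(h) ] = inf [ (α/2)‖ĥ − Σ_{i=1}^{L} cᵢ aᵢ‖² + η·Σ_{i=1}^{L} cᵢ ], where the right-hand infimum runs over all L ∈ ℕ, all c₁,…,c_L ≥ 0, and all a₁,…,a_L ∈ A. -/
/-!
The reformulated problem is the proximal problem restricted to the pairs `(h, t)` with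
`h = ∑ cᵢ aᵢ`, `t = ∑ cᵢ`. Along any such decomposition the atomic norm of `h` is at most `t`,
by subadditivity and homogeneity of the gauge; conversely every `t` above the atomic norm of `h`
is approached by decompositions of `h`, because `h ∈ b • conv A` for some `b < t`. Both infima
therefore agree as soon as the gauge is finite and subadditive, i.e. `conv A` is absorbent: a
symmetric convex set spanning a finite-dimensional space has `0` in its interior.
-/

open Set Filter Topology
open scoped Pointwise

section

variable {E : Type*} [AddCommGroup E] [Module ℝ E]

theorem gauge_sum_smul_le {s : Set E} (hs : Convex ℝ s) (habs : Absorbent ℝ s) {ι : Type*}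
    (t : Finset ι) {c : ι → ℝ} {a : ι → E} (hc : ∀ i ∈ t, 0 ≤ c i) (ha : ∀ i ∈ t, a i ∈ s) :
    gauge s (∑ i ∈ t, c i • a i) ≤ ∑ i ∈ t, c i :=
  calc gauge s (∑ i ∈ t, c i • a i) ≤ ∑ i ∈ t, gauge s (c i • a i) :=
        Finset.le_sum_of_subadditive _ gauge_zero.le (gauge_add_le hs habs) _ _
    _ ≤ ∑ i ∈ t, c i := Finset.sum_le_sum fun i hi => by
        rw [gauge_smul_of_nonneg (hc i hi)]
        exact mul_le_of_le_one_right (hc i hi) (gauge_le_one_of_mem (ha i hi))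

theorem exists_sum_smul_eq_of_mem_smul_convexHull {A : Set E} {b : ℝ} {x : E}
    (hx : x ∈ b • convexHull ℝ A) (hb : 0 ≤ b) :
    ∃ (L : ℕ) (c : Fin L → ℝ) (a : Fin L → E), (∀ i, 0 ≤ c i) ∧ (∀ i, a i ∈ A) ∧
      ∑ i, c i • a i = x ∧ ∑ i, c i = b := by
  obtain ⟨y, hy, rfl⟩ := hx
  obtain ⟨ι, _, w, z, hw0, hw1, hzA, rfl⟩ := mem_convexHull_iff_exists_fintype.1 hy
  let e := (Fintype.equivFin ι).symm
  refine ⟨Fintype.card ι, fun i => b * w (e i), fun i => z (e i),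
    fun i => mul_nonneg hb (hw0 _), fun i => hzA _, ?_, ?_⟩
  · simp only [Finset.smul_sum, mul_smul]
    exact e.sum_comp fun i => b • w i • z i
  · rw [e.sum_comp fun i => b * w i, ← Finset.mul_sum, hw1, mul_one]

theorem exists_sum_smul_eq_of_gauge_convexHull_lt {A : Set E}
    (habs : Absorbent ℝ (convexHull ℝ A)) {x : E} {t : ℝ} (hx : gauge (convexHull ℝ A) x < t) :
    ∃ (L : ℕ) (c : Fin L → ℝ) (a : Fin L → E), (∀ i, 0 ≤ c i) ∧ (∀ i, a i ∈ A) ∧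
      ∑ i, c i • a i = x ∧ ∑ i, c i < t := by
  obtain ⟨b, hb0, hbt, hxb⟩ := exists_lt_of_gauge_lt habs hx
  obtain ⟨L, c, a, hc, ha, hsum, rfl⟩ := exists_sum_smul_eq_of_mem_smul_convexHull hxb hb0.le
  exact ⟨L, c, a, hc, ha, hsum, hbt⟩

theorem zero_mem_convexHull_of_neg_mem {A : Set E} (hne : A.Nonempty)
    (hneg : ∀ a ∈ A, -a ∈ A) : (0 : E) ∈ convexHull ℝ A := by
  obtain ⟨a, ha⟩ := hne
  simpa only [midpoint_self_neg] using
    segment_subset_convexHull ha (hneg a ha) (midpoint_mem_segment a (-a))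

theorem neg_mem_convexHull_of_neg_mem {A : Set E} (hneg : ∀ a ∈ A, -a ∈ A) {x : E}
    (hx : x ∈ convexHull ℝ A) : -x ∈ convexHull ℝ A := by
  have hA : -A ⊆ A := fun y hy => by simpa using hneg _ hy
  exact convexHull_mono hA (by rw [convexHull_neg]; exact neg_mem_neg.2 hx)

theorem affineSpan_eq_top_of_neg_mem {A : Set E} (hne : A.Nonempty) (hneg : ∀ a ∈ A, -a ∈ A)
    (hspan : Submodule.span ℝ A = ⊤) : affineSpan ℝ A = ⊤ := by
  have h0 : affineSpan ℝ (insert 0 A) = ⊤ := by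
    rw [← AffineSubspace.coe_eq_univ_iff, affineSpan_insert_zero, hspan, Submodule.top_coe]
  rw [eq_top_iff, ← h0, ← affineSpan_convexHull A]
  exact affineSpan_mono ℝ (insert_subset (zero_mem_convexHull_of_neg_mem hne hneg)
    (subset_convexHull ℝ A))

end

section

variable {E : Type*} [NormedAddCommGroup E] [NormedSpace ℝ E]

theorem Convex.zero_mem_interior_of_neg_mem {S : Set E} (hS : Convex ℝ S)
    (hneg : ∀ x ∈ S, -x ∈ S) (hint : (interior S).Nonempty) : (0 : E) ∈ interior S := by
  obtain ⟨x, hx⟩ := hint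
  have hnegx : -x ∈ interior S := by
    rw [mem_interior_iff_mem_nhds] at hx ⊢
    have : (fun y => -y) ⁻¹' S ∈ 𝓝 (-x) :=
      continuous_neg.continuousAt.preimage_mem_nhds (by rwa [neg_neg])
    exact mem_of_superset this fun y hy => by simpa using hneg _ hy
  simpa only [midpoint_self_neg] using
    hS.interior.segment_subset hx hnegx (midpoint_mem_segment x (-x))

theorem convexHull_mem_nhds_zero [FiniteDimensional ℝ E] {A : Set E} (hne : A.Nonempty)
    (hneg : ∀ a ∈ A, -a ∈ A) (hspan : Submodule.span ℝ A = ⊤) : convexHull ℝ A ∈ 𝓝 0 := by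
  have hconv := convex_convexHull ℝ A
  refine mem_interior_iff_mem_nhds.1 (hconv.zero_mem_interior_of_neg_mem
    (fun _ => neg_mem_convexHull_of_neg_mem hneg) ?_)
  rw [hconv.interior_nonempty_iff_affineSpan_eq_top, affineSpan_convexHull]
  exact affineSpan_eq_top_of_neg_mem hne hneg hspan

end

theorem stmt8_general {d : ℕ} (A : Set (EuclideanSpace ℂ (Fin d))) (hne : A.Nonempty)
    (hrot : ∀ a ∈ A, ∀ θ : ℂ, ‖θ‖ = 1 → θ • a ∈ A)
    (hspan : Submodule.span ℝ A = ⊤)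
    (α η : ℝ) (hα : 0 < α) (hη : 0 < η) (hhat : EuclideanSpace ℂ (Fin d)) :
    (⨅ h : EuclideanSpace ℂ (Fin d),
        (α / 2 * ‖hhat - h‖ ^ 2 + η * gauge (convexHull ℝ A) h)) =
      sInf {r : ℝ | ∃ (L : ℕ) (c : Fin L → ℝ) (a : Fin L → EuclideanSpace ℂ (Fin d)),
        (∀ i, 0 ≤ c i) ∧ (∀ i, a i ∈ A) ∧
          r = α / 2 * ‖hhat - ∑ i, c i • a i‖ ^ 2 + η * ∑ i, c i} := by
  have hneg : ∀ a ∈ A, -a ∈ A := fun a ha => by simpa using hrot a ha (-1) (by simp)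
  have habs : Absorbent ℝ (convexHull ℝ A) :=
    absorbent_nhds_zero (convexHull_mem_nhds_zero hne hneg hspan)
  apply le_antisymm
  · refine le_csInf ⟨_, 0, Fin.elim0, Fin.elim0, fun i => i.elim0, fun i => i.elim0, rfl⟩ ?_
    rintro _ ⟨L, c, a, hc, ha, rfl⟩
    refine ciInf_le_of_le ⟨0, ?_⟩ (∑ i, c i • a i) ?_
    · rintro _ ⟨h, rfl⟩
      have := gauge_nonneg (s := convexHull ℝ A) h
      positivity
    · gcongr
      exact gauge_sum_smul_le (convex_convexHull ℝ A) habs _ (fun i _ => hc i)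
        fun i _ => subset_convexHull ℝ A (ha i)
  · refine le_ciInf fun h => le_of_forall_pos_le_add fun ε hε => ?_
    obtain ⟨L, c, a, hc, ha, rfl, hlt⟩ := exists_sum_smul_eq_of_gauge_convexHull_lt habs
      (lt_add_of_pos_right (gauge (convexHull ℝ A) h) (div_pos hε hη))
    calc _ ≤ α / 2 * ‖hhat - ∑ i, c i • a i‖ ^ 2 + η * ∑ i, c i := by
          refine csInf_le ⟨0, ?_⟩ ⟨L, c, a, hc, ha, rfl⟩
          rintro _ ⟨L, c, a, hc, -, rfl⟩
          have := Finset.sum_nonneg fun i (_ : i ∈ Finset.univ) => hc i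
          positivity
      _ ≤ _ := by
          have := mul_lt_mul_of_pos_left hlt hη
          rw [mul_add, mul_div_cancel₀ _ hη.ne'] at this
          linarith

/-- Equivalence between the atomic norm denoising proximal problem (34) and its
mixed atomic-decomposition reformulation (36). -/
theorem stmt8 {d : ℕ} (A : Set (EuclideanSpace ℂ (Fin d))) (hne : A.Nonempty)
    (hcpt : IsCompact A)
    (hrot : ∀ a ∈ A, ∀ θ : ℂ, ‖θ‖ = 1 → θ • a ∈ A)
    (hspan : Submodule.span ℝ A = ⊤)
    (α η : ℝ) (hα : 0 < α) (hη : 0 < η) (hhat : EuclideanSpace ℂ (Fin d)) :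
    (⨅ h : EuclideanSpace ℂ (Fin d),
        (α / 2 * ‖hhat - h‖ ^ 2 + η * gauge (convexHull ℝ A) h)) =
      sInf {r : ℝ | ∃ (L : ℕ) (c : Fin L → ℝ) (a : Fin L → EuclideanSpace ℂ (Fin d)),
        (∀ i, 0 ≤ c i) ∧ (∀ i, a i ∈ A) ∧
          r = α / 2 * ‖hhat - ∑ i, c i • a i‖ ^ 2 + η * ∑ i, c i} :=
  stmt8_general A hne hrot hspan α η hα hη hhat
end

section
/- Let h, a ∈ ℂᵈ with a ≠ 0, let α > 0 and η > 0, and set p = ⟨a, h⟩ = Σᵢ conj(aᵢ)hᵢ. Then the function J(c) = (α/2)‖h − c·a‖² + η|c| on ℂ has a unique minimizer c*, given by c* = 0 if |p| ≤ η/α, and c* = (p/‖a‖²)·(1 − η/(α|p|)) if |p| > η/α. -/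
/-!
With `z = p / ‖a‖²` the vector `h - z • a` is orthogonal to `a`, so by Pythagoras
`J c = α/2 ‖h - z • a‖² + α ‖a‖² g c` where `g x = ½ ‖x - z‖² + t ‖x‖` and `t = η / (α ‖a‖²)`.
Viewing `ℂ` as a real inner product space, `g` is minimized by the soft threshold `S` of `z`, with
quadratic growth `g S + ½ ‖x - S‖² ≤ g x`: when `S ≠ 0` the gap equals
`(t / ‖z‖) (‖x‖ ‖z‖ - ⟪x, z⟫)`, nonnegative by Cauchy–Schwarz. Quadratic growth gives both
minimality and uniqueness.
-/

theorem norm_sub_smul_sq_eq {𝕜 F : Type*} [RCLike 𝕜] [NormedAddCommGroup F]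
    [InnerProductSpace 𝕜 F] (h a : F) (c : 𝕜) :
    ‖h - c • a‖ ^ 2 = ‖h - (inner 𝕜 a h / ((‖a‖ ^ 2 : ℝ) : 𝕜)) • a‖ ^ 2
      + ‖c - inner 𝕜 a h / ((‖a‖ ^ 2 : ℝ) : 𝕜)‖ ^ 2 * ‖a‖ ^ 2 := by
  set z := inner 𝕜 a h / ((‖a‖ ^ 2 : ℝ) : 𝕜)
  have horth : inner 𝕜 (h - z • a) ((z - c) • a) = 0 := by
    rcases eq_or_ne a 0 with rfl | ha
    · simp
    have hN : ((‖a‖ ^ 2 : ℝ) : 𝕜) ≠ 0 := by simpa using ha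
    have ha_orth : inner 𝕜 a (h - z • a) = 0 := by
      rw [inner_sub_right, inner_smul_right, inner_self_eq_norm_sq_to_K, ← RCLike.ofReal_pow,
        div_mul_cancel₀ _ hN, sub_self]
    rw [inner_smul_right, ← inner_conj_symm, ha_orth, map_zero, mul_zero]
  calc ‖h - c • a‖ ^ 2 = ‖(h - z • a) + (z - c) • a‖ ^ 2 := by
        congr 2; rw [sub_smul]; abel
    _ = _ := by
        rw [sq, sq, norm_add_sq_eq_norm_sq_add_norm_sq_of_inner_eq_zero _ _ horth, ← sq, ← sq,
          norm_smul, mul_pow, norm_sub_rev z c]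

theorem forall_le_and_eq_of_add_sq_norm_sub_le {E : Type*} [NormedAddCommGroup E] {f : E → ℝ}
    {c : E} {κ : ℝ} (hκ : 0 < κ) (hf : ∀ x, f c + κ * ‖x - c‖ ^ 2 ≤ f x) :
    (∀ x, f c ≤ f x) ∧ ∀ x, (∀ y, f x ≤ f y) → x = c := by
  refine ⟨fun x => ?_, fun x hx => ?_⟩
  · nlinarith [hf x]
  · have hsq : κ * ‖x - c‖ ^ 2 ≤ 0 := by linarith [hf x, hx c]
    have : ‖x - c‖ ^ 2 = 0 := le_antisymm (nonpos_of_mul_nonpos_right hsq hκ) (by positivity)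
    simpa [sub_eq_zero] using this

section SoftThreshold

variable {E : Type*} [NormedAddCommGroup E] [InnerProductSpace ℝ E]

noncomputable def softThreshold (t : ℝ) (z : E) : E :=
  if ‖z‖ ≤ t then 0 else (1 - t / ‖z‖) • z

noncomputable def softThresholdObjective (t : ℝ) (z x : E) : ℝ :=
  1 / 2 * ‖x - z‖ ^ 2 + t * ‖x‖

theorem softThresholdObjective_softThreshold_add_le {t : ℝ} (ht : 0 ≤ t) (z x : E) :
    softThresholdObjective t z (softThreshold t z) + 1 / 2 * ‖x - softThreshold t z‖ ^ 2 ≤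
      softThresholdObjective t z x := by
  have hinner := real_inner_le_norm x z
  unfold softThresholdObjective softThreshold
  split_ifs with hz
  · simp only [zero_sub, norm_neg, norm_zero, mul_zero, add_zero, sub_zero]
    rw [norm_sub_sq_real]
    nlinarith [norm_nonneg x, mul_le_mul_of_nonneg_left hz (norm_nonneg x)]
  · have hzpos : 0 < ‖z‖ := ht.trans_lt (not_le.mp hz)
    obtain ⟨r, hr⟩ : ∃ r, r = t / ‖z‖ := ⟨_, rfl⟩
    have hrz : r * ‖z‖ = t := by rw [hr, div_mul_cancel₀ _ hzpos.ne']
    have hr0 : 0 ≤ r := hr ▸ div_nonneg ht hzpos.le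
    have hr1 : r ≤ 1 := hr ▸ (div_le_one hzpos).mpr (not_le.mp hz).le
    have hres : (1 - r) • z - z = -(r • z) := by rw [sub_smul, one_smul]; abel
    rw [← hr, hres, norm_neg, norm_sub_sq_real x, norm_sub_sq_real x, inner_smul_right,
      norm_smul, norm_smul, Real.norm_of_nonneg hr0, Real.norm_of_nonneg (sub_nonneg.mpr hr1),
      ← hrz]
    linear_combination mul_le_mul_of_nonneg_left hinner hr0

end SoftThreshold

theorem softThreshold_div_ofReal {N : ℝ} (hN : 0 < N) (t : ℝ) (p : ℂ) :
    softThreshold (t / N) (p / (N : ℂ)) =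
      if ‖p‖ ≤ t then 0 else ((1 - t / ‖p‖ : ℝ) : ℂ) * (p / (N : ℂ)) := by
  have hnorm : ‖p / (N : ℂ)‖ = ‖p‖ / N := by
    rw [norm_div, Complex.norm_real, Real.norm_of_nonneg hN.le]
  have hratio : t / N / (‖p‖ / N) = t / ‖p‖ := div_div_div_cancel_right₀ hN.ne' t ‖p‖
  simp only [softThreshold, hnorm, div_le_div_iff_of_pos_right hN, hratio, Complex.real_smul]

/-- Closed-form complex soft-thresholding solution of the single-atom coefficient
subproblem (steps 7 and 17 of Algorithm 1). -/
theorem stmt9 {d : ℕ} (h a : EuclideanSpace ℂ (Fin d)) (ha : a ≠ 0)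
    (α η : ℝ) (hα : 0 < α) (hη : 0 < η) :
    let p : ℂ := inner ℂ a h
    let cstar : ℂ :=
      if ‖p‖ ≤ η / α then 0
      else ((1 - η / (α * ‖p‖) : ℝ) : ℂ) * (p / ((‖a‖ ^ 2 : ℝ) : ℂ))
    (∀ c : ℂ,
      α / 2 * ‖h - cstar • a‖ ^ 2 + η * ‖cstar‖ ≤
        α / 2 * ‖h - c • a‖ ^ 2 + η * ‖c‖) ∧
    (∀ c : ℂ,
      (∀ c' : ℂ, α / 2 * ‖h - c • a‖ ^ 2 + η * ‖c‖ ≤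
        α / 2 * ‖h - c' • a‖ ^ 2 + η * ‖c'‖) → c = cstar) := by
  intro p cstar
  set N : ℝ := ‖a‖ ^ 2
  have hN : 0 < N := pow_pos (norm_pos_iff.mpr ha) 2
  have hαN : 0 < α * N := mul_pos hα hN
  set z : ℂ := p / (N : ℂ)
  set t : ℝ := η / (α * N)
  have hαNt : α * N * t = η := mul_div_cancel₀ η hαN.ne'
  have hcstar : cstar = softThreshold t z := by
    have hsoft := softThreshold_div_ofReal hN (η / α) p
    rw [div_div, div_div] at hsoft
    exact hsoft.symm
  have hJ : ∀ c : ℂ, α / 2 * ‖h - c • a‖ ^ 2 + η * ‖c‖ =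
      α / 2 * ‖h - z • a‖ ^ 2 + α * N * softThresholdObjective t z c := by
    intro c
    have hdecomp : ‖h - c • a‖ ^ 2 = ‖h - z • a‖ ^ 2 + ‖c - z‖ ^ 2 * N :=
      norm_sub_smul_sq_eq h a c
    rw [hdecomp, ← hαNt, softThresholdObjective]
    ring
  refine forall_le_and_eq_of_add_sq_norm_sub_le
    (f := fun c : ℂ => α / 2 * ‖h - c • a‖ ^ 2 + η * ‖c‖) (half_pos hαN) fun c => ?_
  have hgrowth := softThresholdObjective_softThreshold_add_le (div_nonneg hη.le hαN.le) z c
  rw [hJ, hJ, hcstar]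
  linear_combination (α * N) * hgrowth
end

section
/- Let S₀ ⊆ ℂ be a finite nonempty set all of whose elements have modulus 1, let D = conv(S₀) ⊆ ℂ (real convex hull), let H be a complex m×n matrix and y ∈ ℂᵐ. Then there exists ρ₀ > 0 such that for every ρ > ρ₀, the set of global minimizers of x ↦ (1/2)‖y − Hx‖² − ρ‖x‖² over the product Dⁿ ⊆ ℂⁿ coincides with the set of global minimizers of x ↦ (1/2)‖y − Hx‖² over the discrete set S₀ⁿ. -/
/-!
Once `ρ > ‖H‖² / 2`, the penalty `-ρ‖x‖²` outweighs the curvature `½‖Hx‖²` of the residual, so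
the penalized objective is strictly concave. A minimizer of a strictly concave function over
`Dⁿ = conv (S₀ⁿ)` must be an extreme point, hence lies in `S₀ⁿ`; conversely, by the minimum
principle for concave functions, the minimum over `Dⁿ` is already attained on `S₀ⁿ`. On `S₀ⁿ`
the penalty is the constant `-ρ n`, so there it does not change the minimizers of the residual.
-/

open Set

section Extremal

variable {𝕜 E β : Type*} [Field 𝕜] [LinearOrder 𝕜] [IsStrictOrderedRing 𝕜] [AddCommGroup E]
  [Module 𝕜 E] [AddCommGroup β] [LinearOrder β] [IsOrderedAddMonoid β] [Module 𝕜 β]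
  [IsStrictOrderedModule 𝕜 β] {s : Set E} {f : E → β} {x : E}

lemma StrictConcaveOn.mem_extremePoints_of_isMinOn (hf : StrictConcaveOn 𝕜 s f) (hxs : x ∈ s)
    (hx : IsMinOn f s x) : x ∈ s.extremePoints 𝕜 := by
  refine ⟨hxs, fun x₁ hx₁ x₂ hx₂ hseg => ?_⟩
  obtain rfl | hne := eq_or_ne x₁ x₂
  · rw [openSegment_same, mem_singleton_iff] at hseg
    exact hseg.symm
  obtain ⟨a, b, ha, hb, hab, rfl⟩ := hseg
  have hlt := hf.2 hx₁ hx₂ hne ha hb hab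
  have hle : a • f (a • x₁ + b • x₂) + b • f (a • x₁ + b • x₂) ≤ a • f x₁ + b • f x₂ :=
    add_le_add (smul_le_smul_of_nonneg_left (hx hx₁) ha.le)
      (smul_le_smul_of_nonneg_left (hx hx₂) hb.le)
  rw [← add_smul, hab, one_smul] at hle
  exact absurd (hle.trans_lt hlt) (lt_irrefl _)

lemma StrictConcaveOn.isMinOn_convexHull_iff (hf : StrictConcaveOn 𝕜 (convexHull 𝕜 s) f) :
    x ∈ convexHull 𝕜 s ∧ IsMinOn f (convexHull 𝕜 s) x ↔ x ∈ s ∧ IsMinOn f s x := by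
  constructor
  · rintro ⟨hx, hmin⟩
    exact ⟨extremePoints_convexHull_subset (hf.mem_extremePoints_of_isMinOn hx hmin),
      hmin.on_subset (subset_convexHull 𝕜 s)⟩
  · rintro ⟨hx, hmin⟩
    refine ⟨subset_convexHull 𝕜 s hx, fun z hz => ?_⟩
    obtain ⟨w, hw, hwz⟩ := hf.concaveOn.exists_le_of_mem_convexHull (subset_convexHull 𝕜 s) hz
    exact (hmin hw).trans hwz

end Extremal

lemma isMinOn_iff_of_forall_eq_sub_const {α : Type*} {f g : α → ℝ} {s : Set α} {c : ℝ} {a : α}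
    (h : ∀ x ∈ s, f x = g x - c) (ha : a ∈ s) : IsMinOn f s a ↔ IsMinOn g s a := by
  simp only [isMinOn_iff]
  exact forall₂_congr fun z hz => by rw [h a ha, h z hz, sub_le_sub_iff_right]

lemma PiLp.convexHull_setOf_forall_mem {𝕜 ι : Type*} {β : ι → Type*} [Finite ι] [Field 𝕜]
    [LinearOrder 𝕜] [IsStrictOrderedRing 𝕜] [∀ i, AddCommGroup (β i)] [∀ i, Module 𝕜 (β i)]
    (p : ENNReal) (t : ∀ i, Set (β i)) :
    convexHull 𝕜 {x : PiLp p β | ∀ i, x i ∈ t i} = {x | ∀ i, x i ∈ convexHull 𝕜 (t i)} := by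
  set e := (WithLp.linearEquiv p 𝕜 (∀ i, β i)).symm
  have hbox : ∀ u : ∀ i, Set (β i), {x : PiLp p β | ∀ i, x i ∈ u i} = e '' univ.pi u := by
    intro u
    rw [LinearEquiv.image_symm_eq_preimage]
    ext x
    simp [WithLp.linearEquiv]
  rw [hbox, hbox, ← IsLinearMap.image_convexHull (f := e) e.toLinearMap.isLinear, convexHull_pi]

lemma EuclideanSpace.norm_sq_eq_card {𝕜 ι : Type*} [RCLike 𝕜] [Fintype ι]
    {x : EuclideanSpace 𝕜 ι} (hx : ∀ i, ‖x i‖ = 1) : ‖x‖ ^ 2 = Fintype.card ι := by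
  simp [EuclideanSpace.norm_sq_eq, hx]

section Penalized

variable {E F : Type*} [NormedAddCommGroup E] [InnerProductSpace ℝ E]
  [NormedAddCommGroup F] [InnerProductSpace ℝ F]

lemma norm_smul_add_smul_sq {a b : ℝ} (hab : a + b = 1) (u v : F) :
    ‖a • u + b • v‖ ^ 2 = a * ‖u‖ ^ 2 + b * ‖v‖ ^ 2 - a * b * ‖u - v‖ ^ 2 := by
  rw [norm_add_sq_real, norm_sub_sq_real, real_inner_smul_left, real_inner_smul_right,
    norm_smul, norm_smul, mul_pow, mul_pow, Real.norm_eq_abs, Real.norm_eq_abs, sq_abs, sq_abs]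
  obtain rfl : b = 1 - a := by linarith
  ring

lemma penalized_smul_add_smul (L : E →L[ℝ] F) (y : F) (ρ : ℝ) {a b : ℝ} (hab : a + b = 1)
    (u v : E) :
    1 / 2 * ‖y - L (a • u + b • v)‖ ^ 2 - ρ * ‖a • u + b • v‖ ^ 2 =
      a * (1 / 2 * ‖y - L u‖ ^ 2 - ρ * ‖u‖ ^ 2) + b * (1 / 2 * ‖y - L v‖ ^ 2 - ρ * ‖v‖ ^ 2)
        + a * b * (ρ * ‖u - v‖ ^ 2 - 1 / 2 * ‖L (u - v)‖ ^ 2) := by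
  have hres : y - L (a • u + b • v) = a • (y - L u) + b • (y - L v) := by
    rw [map_add, map_smul, map_smul, smul_sub, smul_sub]
    nth_rw 1 [← one_smul ℝ y, ← hab, add_smul]
    abel
  rw [hres, norm_smul_add_smul_sq hab, norm_smul_add_smul_sq hab, sub_sub_sub_cancel_left,
    norm_sub_rev (L v), ← map_sub]
  ring

lemma strictConcaveOn_penalized (L : E →L[ℝ] F) (y : F) {ρ : ℝ} (hρ : ‖L‖ ^ 2 / 2 < ρ) :
    StrictConcaveOn ℝ univ fun x => 1 / 2 * ‖y - L x‖ ^ 2 - ρ * ‖x‖ ^ 2 := by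
  refine ⟨convex_univ, fun u _ v _ huv a b ha hb hab => ?_⟩
  have hgap : 0 < ρ * ‖u - v‖ ^ 2 - 1 / 2 * ‖L (u - v)‖ ^ 2 := by
    have hd : 0 < ‖u - v‖ := norm_pos_iff.2 (sub_ne_zero.2 huv)
    have hL : ‖L (u - v)‖ ^ 2 ≤ ‖L‖ ^ 2 * ‖u - v‖ ^ 2 := by
      rw [← mul_pow]; gcongr; exact L.le_opNorm _
    nlinarith [pow_pos hd 2]
  simp only [smul_eq_mul]
  rw [penalized_smul_add_smul L y ρ hab]
  nlinarith [mul_pos (mul_pos ha hb) hgap]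

end Penalized

theorem stmt11_general {m n : ℕ} (S₀ : Set ℂ)
    (hmod : ∀ s ∈ S₀, ‖s‖ = 1)
    (H : Matrix (Fin m) (Fin n) ℂ) (y : EuclideanSpace ℂ (Fin m)) :
    ∃ ρ₀ : ℝ, 0 < ρ₀ ∧ ∀ ρ : ℝ, ρ₀ < ρ →
      {x : EuclideanSpace ℂ (Fin n) | (∀ i, x i ∈ convexHull ℝ S₀) ∧
        ∀ z : EuclideanSpace ℂ (Fin n), (∀ i, z i ∈ convexHull ℝ S₀) →
          1 / 2 * ‖y - Matrix.toEuclideanLin H x‖ ^ 2 - ρ * ‖x‖ ^ 2 ≤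
            1 / 2 * ‖y - Matrix.toEuclideanLin H z‖ ^ 2 - ρ * ‖z‖ ^ 2} =
      {x : EuclideanSpace ℂ (Fin n) | (∀ i, x i ∈ S₀) ∧
        ∀ z : EuclideanSpace ℂ (Fin n), (∀ i, z i ∈ S₀) →
          1 / 2 * ‖y - Matrix.toEuclideanLin H x‖ ^ 2 ≤
            1 / 2 * ‖y - Matrix.toEuclideanLin H z‖ ^ 2} := by
  -- `ℂⁿ` viewed as a real inner product space, with the same norm
  set L := ((Matrix.toEuclideanLin H).restrictScalars ℝ).toContinuousLinearMap
  refine ⟨‖L‖ ^ 2 / 2 + 1, by positivity, fun ρ hρ => ?_⟩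
  set S := {x : EuclideanSpace ℂ (Fin n) | ∀ i, x i ∈ S₀}
  have hf := (strictConcaveOn_penalized L y (ρ := ρ) (by linarith)).subset (subset_univ _)
    (convex_convexHull ℝ S)
  have hnorm : ∀ x ∈ S, ‖x‖ ^ 2 = n := fun x hx => by
    simpa using EuclideanSpace.norm_sq_eq_card fun i => hmod _ (hx i)
  ext x
  change x ∈ {x | ∀ i, x i ∈ convexHull ℝ S₀} ∧
      IsMinOn (fun x => 1 / 2 * ‖y - L x‖ ^ 2 - ρ * ‖x‖ ^ 2) {x | ∀ i, x i ∈ convexHull ℝ S₀} x ↔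
    x ∈ S ∧ IsMinOn (fun x => 1 / 2 * ‖y - L x‖ ^ 2) S x
  rw [← PiLp.convexHull_setOf_forall_mem, hf.isMinOn_convexHull_iff]
  exact and_congr_right fun hx => isMinOn_iff_of_forall_eq_sub_const
    (fun z hz => by rw [hnorm z hz]) hx

/-- Lemma 1 (negative-square penalty exactness for constant-modulus constellations):
for sufficiently large ρ, the penalized relaxed problem over the convex hull of the
constellation has the same global minimizers as the original discrete problem. -/
theorem stmt11 {m n : ℕ} (S₀ : Set ℂ) (hfin : S₀.Finite) (hne : S₀.Nonempty)
    (hmod : ∀ s ∈ S₀, ‖s‖ = 1)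
    (H : Matrix (Fin m) (Fin n) ℂ) (y : EuclideanSpace ℂ (Fin m)) :
    ∃ ρ₀ : ℝ, 0 < ρ₀ ∧ ∀ ρ : ℝ, ρ₀ < ρ →
      {x : EuclideanSpace ℂ (Fin n) | (∀ i, x i ∈ convexHull ℝ S₀) ∧
        ∀ z : EuclideanSpace ℂ (Fin n), (∀ i, z i ∈ convexHull ℝ S₀) →
          1 / 2 * ‖y - Matrix.toEuclideanLin H x‖ ^ 2 - ρ * ‖x‖ ^ 2 ≤
            1 / 2 * ‖y - Matrix.toEuclideanLin H z‖ ^ 2 - ρ * ‖z‖ ^ 2} =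
      {x : EuclideanSpace ℂ (Fin n) | (∀ i, x i ∈ S₀) ∧
        ∀ z : EuclideanSpace ℂ (Fin n), (∀ i, z i ∈ S₀) →
          1 / 2 * ‖y - Matrix.toEuclideanLin H x‖ ^ 2 ≤
            1 / 2 * ‖y - Matrix.toEuclideanLin H z‖ ^ 2} :=
  stmt11_general S₀ hmod H y
end

section
/- Let C₁ᵃ, C₂ᵃ, C₁ᵇ, C₂ᵇ be reals with 0 < C₁ᵃ ≤ C₂ᵃ and 0 < C₁ᵇ ≤ C₂ᵇ, let θ ∈ (0,1], and let μ̄, ῑ ≥ 0 satisfy μ̄² ≤ (C₁ᵃ/C₂ᵃ)(1−θ) and ῑ² ≤ (C₁ᵇ/C₂ᵇ)(1−θ). Let (α_t), (β_t) be sequences with C₁ᵃ ≤ α_t ≤ C₂ᵃ and C₁ᵇ ≤ β_t ≤ C₂ᵇ, let (ε_t) be a nonnegative, nonincreasing, summable sequence, let (a_t), (b_t) be nonnegative sequences with a₀ = b₀ = 0, let (F_t) be a real sequence bounded below by some F* ∈ ℝ, and let C̄ ≥ 0, (d_t) a nonnegative sequence. Suppose for all t ≥ 0: (i) F_{t+1}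 − F_t ≤ √(2 α_t ε_t)·a_{t+1} − (α_t/2)(a_{t+1}² − μ̄² a_t²) − (β_t/2)(b_{t+1}² − ῑ² b_t²) + ε_t, and (ii) d_{t+1} ≤ C̄(a_{t+1} + a_t + b_{t+1} + b_t) + √(2 α_t ε_t). Then there exists a finite constant C such that for all t ≥ 1, min_{0 ≤ t' ≤ t} d_{t'+1} ≤ C/√t. -/
/-!
Young's inequality absorbs the inexactness term `√(2 α_t ε_t) a_{t+1}` into a fraction `θ/4` of
the quadratic decrease, at the price of an extra `2 ε_t / θ`. The conditions on `μ` and `ι` then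
make `Φ_t = F_t + (1 - θ)/2 (C₁ᵃ a_t² + C₁ᵇ b_t²)` a Lyapunov function that decreases by a
multiple of `a_{t+1}² + b_{t+1}²` up to a summable error; since `Φ` is bounded below,
`∑ (a_t² + b_t²) < ∞`. By (ii) also `∑ d_{t+1}² ≤ S < ∞`, and among `t` terms whose squares sum
to at most `S` one is at most `√S / √t`.
-/

open Finset

lemma sqrt_mul_mul_le {p q c : ℝ} (hp : 0 ≤ p) (hq : 0 ≤ q) (hc : 0 < c) (x : ℝ) :
    √(p * q) * x ≤ (c * p * x ^ 2 + q / c) / 2 := by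
  have hpq : √(p * q) = √p * √q := Real.sqrt_mul hp q
  have hc' : (c * p * x ^ 2 + q / c) * c = c ^ 2 * p * x ^ 2 + q := by field_simp
  rw [hpq, le_div_iff₀ two_pos, ← mul_le_mul_iff_of_pos_right hc, hc']
  linear_combination sq_nonneg (c * √p * x - √q) + c ^ 2 * x ^ 2 * Real.sq_sqrt hp
    + Real.sq_sqrt hq

lemma mul_le_of_le_div_mul {m A B k α : ℝ} (hm : 0 ≤ m) (h : m ≤ A / B * k) (hα : 0 < α)
    (hαB : α ≤ B) : m * α ≤ A * k := by
  have hB : 0 < B := hα.trans_le hαB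
  calc m * α ≤ A / B * k * B := mul_le_mul h hαB hα.le (hm.trans h)
    _ = A * k := by field_simp

lemma potential_descent_step {θ κ Ca Cb α β μ ι e a a' b b' F F' : ℝ}
    (hθ : 0 < θ) (hθ1 : θ ≤ 1) (hκa : κ ≤ Ca) (hκb : κ ≤ Cb) (hCa : 0 ≤ Ca) (hCb : 0 ≤ Cb)
    (hα : Ca ≤ α) (hβ : Cb ≤ β) (hαμ : μ ^ 2 * α ≤ Ca * (1 - θ))
    (hβι : ι ^ 2 * β ≤ Cb * (1 - θ)) (he : 0 ≤ e)
    (h : F' - F ≤ √(2 * α * e) * a' - α / 2 * (a' ^ 2 - μ ^ 2 * a ^ 2)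
      - β / 2 * (b' ^ 2 - ι ^ 2 * b ^ 2) + e) :
    F' + (1 - θ) / 2 * (Ca * a' ^ 2 + Cb * b' ^ 2) + θ / 4 * κ * (a' ^ 2 + b' ^ 2)
      ≤ F + (1 - θ) / 2 * (Ca * a ^ 2 + Cb * b ^ 2) + (2 / θ + 1) * e := by
  have young : √(2 * α * e) * a' ≤ α * θ / 4 * a' ^ 2 + 2 / θ * e := by
    refine (sqrt_mul_mul_le (by linarith) he (by positivity : 0 < θ / 4) a').trans_eq ?_
    field_simp
    ring
  have hα' : Ca * (2 - θ) * a' ^ 2 ≤ α * (2 - θ) * a' ^ 2 := by gcongr; linarith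
  have hβ' : Cb * b' ^ 2 ≤ β * b' ^ 2 := by gcongr
  have hαμ' : μ ^ 2 * α * a ^ 2 ≤ Ca * (1 - θ) * a ^ 2 := by gcongr
  have hβι' : ι ^ 2 * β * b ^ 2 ≤ Cb * (1 - θ) * b ^ 2 := by gcongr
  have hκ : θ * (κ * a' ^ 2 + κ * b' ^ 2) ≤ θ * (Ca * a' ^ 2 + Cb * b' ^ 2) := by gcongr
  linarith [mul_nonneg (mul_nonneg hθ.le hCb) (sq_nonneg b')]

lemma sum_range_succ_le_of_potential {Φ r e : ℕ → ℝ} {c L : ℝ} (hc : 0 < c)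
    (hΦ : ∀ t, L ≤ Φ t) (he : ∀ t, 0 ≤ e t) (hsum : Summable e)
    (h : ∀ t, Φ (t + 1) + c * r (t + 1) ≤ Φ t + e t) (n : ℕ) :
    ∑ t ∈ range n, r (t + 1) ≤ (Φ 0 - L + ∑' t, e t) / c := by
  have telescope : ∀ n, Φ n + c * ∑ t ∈ range n, r (t + 1) ≤ Φ 0 + ∑ t ∈ range n, e t := by
    intro n
    induction n with
    | zero => simp
    | succ n ih =>
      rw [sum_range_succ, sum_range_succ]
      linarith [h n]
  rw [le_div_iff₀ hc]
  linarith [telescope n, hΦ n, hsum.sum_le_tsum (range n) (fun i _ => he i)]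

lemma sum_range_le_sum_range_succ {r : ℕ → ℝ} (h0 : r 0 = 0) (hr : ∀ t, 0 ≤ r t) (n : ℕ) :
    ∑ t ∈ range n, r t ≤ ∑ t ∈ range n, r (t + 1) := by
  calc ∑ t ∈ range n, r t ≤ ∑ t ∈ range (n + 1), r t := by
        rw [sum_range_succ]; linarith [hr n]
    _ = ∑ t ∈ range n, r (t + 1) := by rw [sum_range_succ', h0, add_zero]

lemma sq_le_of_le_mul_add {x C p q r s y : ℝ} (hx : 0 ≤ x) (h : x ≤ C * (p + q + r + s) + y) :
    x ^ 2 ≤ 8 * C ^ 2 * (p ^ 2 + q ^ 2 + r ^ 2 + s ^ 2) + 2 * y ^ 2 := by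
  have four : (p + q + r + s) ^ 2 ≤ 4 * (p ^ 2 + q ^ 2 + r ^ 2 + s ^ 2) := by
    nlinarith [sq_nonneg (p - q), sq_nonneg (p - r), sq_nonneg (p - s),
      sq_nonneg (q - r), sq_nonneg (q - s), sq_nonneg (r - s)]
  calc x ^ 2 ≤ (C * (p + q + r + s) + y) ^ 2 := pow_le_pow_left₀ hx h 2
    _ ≤ 2 * ((C * (p + q + r + s)) ^ 2 + y ^ 2) := add_sq_le
    _ ≤ 8 * C ^ 2 * (p ^ 2 + q ^ 2 + r ^ 2 + s ^ 2) + 2 * y ^ 2 := by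
      nlinarith [mul_le_mul_of_nonneg_left four (sq_nonneg C)]

lemma exists_lt_le_sqrt_div_of_sum_sq_le {x : ℕ → ℝ} {S : ℝ} {n : ℕ}
    (hn : 1 ≤ n) (h : ∑ t ∈ range n, x t ^ 2 ≤ S) : ∃ t < n, x t ≤ √S / √n := by
  have hn' : (0 : ℝ) < n := by exact_mod_cast hn
  obtain ⟨t, ht, hle⟩ := exists_le_of_sum_le (nonempty_range_iff.2 (by omega))
    (h.trans_eq (by simp [mul_div_cancel₀ S hn'.ne'] : S = ∑ _t ∈ range n, S / n))
  refine ⟨t, mem_range.1 ht, ?_⟩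
  rw [← Real.sqrt_div' S hn'.le]
  exact Real.le_sqrt_of_sq_le hle

lemma exists_sum_range_sq_le {d a b α ε : ℕ → ℝ} {C K R : ℝ} (hd : ∀ t, 0 ≤ d t)
    (hα0 : ∀ t, 0 ≤ α t) (hαK : ∀ t, α t ≤ K) (hε : ∀ t, 0 ≤ ε t) (hεsum : Summable ε)
    (ha0 : a 0 = 0) (hb0 : b 0 = 0) (hr : ∀ n, ∑ t ∈ range n, (a (t + 1) ^ 2 + b (t + 1) ^ 2) ≤ R)
    (h : ∀ t, d (t + 1) ≤ C * (a (t + 1) + a t + b (t + 1) + b t) + √(2 * α t * ε t)) :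
    ∃ S, ∀ n, ∑ t ∈ range n, d (t + 1) ^ 2 ≤ S := by
  set r : ℕ → ℝ := fun t => a t ^ 2 + b t ^ 2
  have hr' : ∀ n, ∑ t ∈ range n, r t ≤ R := fun n =>
    (sum_range_le_sum_range_succ (by simp [r, ha0, hb0]) (fun t => by positivity) n).trans (hr n)
  have pointwise : ∀ t, d (t + 1) ^ 2 ≤ 8 * C ^ 2 * (r (t + 1) + r t) + 4 * K * ε t := by
    intro t
    have hsq : √(2 * α t * ε t) ^ 2 ≤ 2 * K * ε t := by
      rw [Real.sq_sqrt (mul_nonneg (mul_nonneg two_pos.le (hα0 t)) (hε t))]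
      nlinarith [hαK t, hε t]
    have := sq_le_of_le_mul_add (hd (t + 1)) (h t)
    simp only [r]
    linarith
  have hK : 0 ≤ K := (hα0 0).trans (hαK 0)
  refine ⟨8 * C ^ 2 * (R + R) + 4 * K * ∑' t, ε t, fun n => ?_⟩
  calc ∑ t ∈ range n, d (t + 1) ^ 2
      ≤ ∑ t ∈ range n, (8 * C ^ 2 * (r (t + 1) + r t) + 4 * K * ε t) :=
        sum_le_sum fun t _ => pointwise t
    _ = 8 * C ^ 2 * (∑ t ∈ range n, r (t + 1) + ∑ t ∈ range n, r t)
          + 4 * K * ∑ t ∈ range n, ε t := by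
      rw [sum_add_distrib, ← mul_sum, ← mul_sum, sum_add_distrib]
    _ ≤ _ := by
      gcongr
      · exact hr n
      · exact hr' n
      · exact hεsum.sum_le_tsum _ fun t _ => hε t

theorem stmt16_general (C1a C2a C1b C2b : ℝ)
    (h1a : 0 < C1a) (h1b : 0 < C1b)
    (θ : ℝ) (hθ : 0 < θ) (hθ1 : θ ≤ 1)
    (μ ι : ℝ)
    (hμ : μ ^ 2 ≤ C1a / C2a * (1 - θ)) (hι : ι ^ 2 ≤ C1b / C2b * (1 - θ))
    (α β ε a b F d : ℕ → ℝ)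
    (hα : ∀ t, C1a ≤ α t ∧ α t ≤ C2a) (hβ : ∀ t, C1b ≤ β t ∧ β t ≤ C2b)
    (hεnn : ∀ t, 0 ≤ ε t) (hεsum : Summable ε)
    (ha0 : a 0 = 0) (hb0 : b 0 = 0)
    (Fstar : ℝ) (hF : ∀ t, Fstar ≤ F t)
    (Cbar : ℝ) (hd : ∀ t, 0 ≤ d t)
    (hi : ∀ t, F (t + 1) - F t ≤
      Real.sqrt (2 * α t * ε t) * a (t + 1)
        - α t / 2 * ((a (t + 1)) ^ 2 - μ ^ 2 * (a t) ^ 2)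
        - β t / 2 * ((b (t + 1)) ^ 2 - ι ^ 2 * (b t) ^ 2) + ε t)
    (hii : ∀ t, d (t + 1) ≤
      Cbar * (a (t + 1) + a t + b (t + 1) + b t) + Real.sqrt (2 * α t * ε t)) :
    ∃ C : ℝ, ∀ t : ℕ, 1 ≤ t → ∃ t' : ℕ, t' ≤ t ∧ d (t' + 1) ≤ C / Real.sqrt t := by
  set r : ℕ → ℝ := fun t => a t ^ 2 + b t ^ 2
  set Φ : ℕ → ℝ := fun t => F t + (1 - θ) / 2 * (C1a * a t ^ 2 + C1b * b t ^ 2)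
  have descent : ∀ t, Φ (t + 1) + θ / 4 * min C1a C1b * r (t + 1) ≤ Φ t + (2 / θ + 1) * ε t :=
    fun t => potential_descent_step hθ hθ1 (min_le_left _ _) (min_le_right _ _) h1a.le h1b.le
      (hα t).1 (hβ t).1 (mul_le_of_le_div_mul (sq_nonneg μ) hμ (h1a.trans_le (hα t).1) (hα t).2)
      (mul_le_of_le_div_mul (sq_nonneg ι) hι (h1b.trans_le (hβ t).1) (hβ t).2) (hεnn t) (hi t)
  have hΦ : ∀ t, Fstar ≤ Φ t := fun t =>
    le_add_of_le_of_nonneg (hF t) (mul_nonneg (by linarith) (by positivity))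
  obtain ⟨R, hr⟩ : ∃ R, ∀ n, ∑ t ∈ range n, r (t + 1) ≤ R :=
    ⟨_, sum_range_succ_le_of_potential (mul_pos (by positivity) (lt_min h1a h1b)) hΦ
      (fun t => mul_nonneg (by positivity) (hεnn t)) (hεsum.mul_left _) descent⟩
  obtain ⟨S, hS⟩ := exists_sum_range_sq_le hd (fun t => h1a.le.trans (hα t).1) (fun t => (hα t).2)
    hεnn hεsum ha0 hb0 hr hii
  refine ⟨√S, fun t ht => ?_⟩
  obtain ⟨t', ht', hle⟩ := exists_lt_le_sqrt_div_of_sum_sq_le ht (hS t)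
  exact ⟨t', ht'.le, hle⟩

/-- Abstract form of Theorem 1: the per-iteration descent bound (i) and the
approximate-stationarity bound (ii) imply an O(1/√t) convergence rate of the best
iterate's stationarity measure. -/
theorem stmt16 (C1a C2a C1b C2b : ℝ)
    (h1a : 0 < C1a) (h12a : C1a ≤ C2a) (h1b : 0 < C1b) (h12b : C1b ≤ C2b)
    (θ : ℝ) (hθ : 0 < θ) (hθ1 : θ ≤ 1)
    (μ ι : ℝ) (hμ0 : 0 ≤ μ) (hι0 : 0 ≤ ι)
    (hμ : μ ^ 2 ≤ C1a / C2a * (1 - θ)) (hι : ι ^ 2 ≤ C1b / C2b * (1 - θ))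
    (α β ε a b F d : ℕ → ℝ)
    (hα : ∀ t, C1a ≤ α t ∧ α t ≤ C2a) (hβ : ∀ t, C1b ≤ β t ∧ β t ≤ C2b)
    (hεnn : ∀ t, 0 ≤ ε t) (hεmono : ∀ t, ε (t + 1) ≤ ε t) (hεsum : Summable ε)
    (ha : ∀ t, 0 ≤ a t) (hb : ∀ t, 0 ≤ b t) (ha0 : a 0 = 0) (hb0 : b 0 = 0)
    (Fstar : ℝ) (hF : ∀ t, Fstar ≤ F t)
    (Cbar : ℝ) (hCbar : 0 ≤ Cbar) (hd : ∀ t, 0 ≤ d t)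
    (hi : ∀ t, F (t + 1) - F t ≤
      Real.sqrt (2 * α t * ε t) * a (t + 1)
        - α t / 2 * ((a (t + 1)) ^ 2 - μ ^ 2 * (a t) ^ 2)
        - β t / 2 * ((b (t + 1)) ^ 2 - ι ^ 2 * (b t) ^ 2) + ε t)
    (hii : ∀ t, d (t + 1) ≤
      Cbar * (a (t + 1) + a t + b (t + 1) + b t) + Real.sqrt (2 * α t * ε t)) :
    ∃ C : ℝ, ∀ t : ℕ, 1 ≤ t → ∃ t' : ℕ, t' ≤ t ∧ d (t' + 1) ≤ C / Real.sqrt t :=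
  stmt16_general C1a C2a C1b C2b h1a h1b θ hθ hθ1 μ ι hμ hι α β ε a b F d hα hβ hεnn hεsum ha0 hb0
    Fstar hF Cbar hd hi hii
end
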